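/- Non-expressibility of complete repulsion: in the single-agent setting Agt = {1}, for every atomic proposition p ∈ Atm and every formula φ of L containing no occurrence of the complete repulsion operator CR, it is not the case that CR(1)p ↔ φ is valid, i.e., there exists a model (S,U) in which (S,U) ⊨ CR(1)p and (S,U) ⊭ φ, or vice versa. -/
import Mathlib


/-- The language L0 of explicit belief: atoms, negation, conjunction, explicit belief. -/
inductive L0 (Agt Atm : Type) : Type
  | atom : Atm → L0 Agt Atm
  | neg  : L0 Agt Atm → L0 Agt Atm
  | and  : L0 Agt Atm → L0 Agt Atm → L0 Agt Atm
  | bel  : Agt → L0 Agt Atm → L0 Agt Atm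

/-- Material implication in L0, as the usual abbreviation. -/
def L0.impl {Agt Atm : Type} (a b : L0 Agt Atm) : L0 Agt Atm := .neg (.and a (.neg b))

/-- A state: a belief base for each agent together with a valuation. -/
structure State (Agt Atm : Type) where
  base : Agt → Set (L0 Agt Atm)
  val  : Set Atm

/-- Satisfaction of an L0 formula at a state. -/
def sat0 {Agt Atm : Type} (S : State Agt Atm) : L0 Agt Atm → Prop
  | .atom p  => p ∈ S.val
  | .neg a   => ¬ sat0 S a
  | .and a b => sat0 S a ∧ sat0 S b
  | .bel i a => a ∈ S.base i

/-- Epistemic relation R(i): S' satisfies every formula in agent i's belief base at S. -/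
def epi {Agt Atm : Type} (i : Agt) (S S' : State Agt Atm) : Prop :=
  ∀ a ∈ S.base i, sat0 S' a

/-- Attraction relation A(i): S' satisfies some α with (α → rew i) in agent i's belief base. -/
def attr {Agt Atm : Type} (rew : Agt → Atm) (i : Agt) (S S' : State Agt Atm) : Prop :=
  ∃ a : L0 Agt Atm, (L0.impl a (.atom (rew i))) ∈ S.base i ∧ sat0 S' a

/-- Repulsion relation P(i): S' satisfies some α with (α → pun i) in agent i's belief base. -/
def repu {Agt Atm : Type} (pun : Agt → Atm) (i : Agt) (S S' : State Agt Atm) : Prop :=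
  ∃ a : L0 Agt Atm, (L0.impl a (.atom (pun i))) ∈ S.base i ∧ sat0 S' a

/-- The language L: L0 formulas, Boolean connectives, implicit belief `box`,
complete attraction `ca`, complete repulsion `cr`, realistic attraction `ra`,
realistic repulsion `rr`. -/
inductive Formula (Agt Atm : Type) : Type
  | emb : L0 Agt Atm → Formula Agt Atm
  | neg : Formula Agt Atm → Formula Agt Atm
  | and : Formula Agt Atm → Formula Agt Atm → Formula Agt Atm
  | box : Agt → Formula Agt Atm → Formula Agt Atm
  | ca  : Agt → Formula Agt Atm → Formula Agt Atm
  | cr  : Agt → Formula Agt Atm → Formula Agt Atm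
  | ra  : Agt → Formula Agt Atm → Formula Agt Atm
  | rr  : Agt → Formula Agt Atm → Formula Agt Atm

/-- Material implication in L. -/
def Formula.impF {Agt Atm : Type} (f g : Formula Agt Atm) : Formula Agt Atm :=
  .neg (.and f (.neg g))

/-- Biconditional in L. -/
def Formula.iffF {Agt Atm : Type} (f g : Formula Agt Atm) : Formula Agt Atm :=
  .and (f.impF g) (g.impF f)

/-- Disjunction in L: φ ∨ ψ := ¬(¬φ ∧ ¬ψ). -/
def Formula.orF {Agt Atm : Type} (f g : Formula Agt Atm) : Formula Agt Atm :=
  .neg (.and (.neg f) (.neg g))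

/-- Truth of an L formula at a state S relative to a context U. -/
def sat {Agt Atm : Type} (rew pun : Agt → Atm) (U : Set (State Agt Atm)) :
    State Agt Atm → Formula Agt Atm → Prop
  | S, .emb a   => sat0 S a
  | S, .neg f   => ¬ sat rew pun U S f
  | S, .and f g => sat rew pun U S f ∧ sat rew pun U S g
  | S, .box i f => ∀ S' ∈ U, epi i S S' → sat rew pun U S' f
  | S, .ca i f  => ∀ S' ∈ U, sat rew pun U S' f → attr rew i S S'
  | S, .cr i f  => ∀ S' ∈ U, sat rew pun U S' f → repu pun i S S'
  | S, .ra i f  => ∀ S' ∈ U, sat rew pun U S' f → epi i S S' → attr rew i S S'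
  | S, .rr i f  => ∀ S' ∈ U, sat rew pun U S' f → epi i S S' → repu pun i S S'

/-- Validity: truth at every model (S,U) with S ∈ U. -/
def valid {Agt Atm : Type} (rew pun : Agt → Atm) (f : Formula Agt Atm) : Prop :=
  ∀ (U : Set (State Agt Atm)) (S : State Agt Atm), S ∈ U → sat rew pun U S f

/-- φ contains no occurrence of the operator cr. -/
def CRFree {Agt Atm : Type} : Formula Agt Atm → Prop
  | .emb _ => True
  | .neg f => CRFree f
  | .and f g => CRFree f ∧ CRFree g
  | .box _ f => CRFree f
  | .ca _ f => CRFree f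
  | .cr _ _ => False
  | .ra _ f => CRFree f
  | .rr _ f => CRFree f

/-- A tautology of L0. -/
def tautF {Atm : Type} (p : Atm) : L0 Unit Atm := L0.impl (.atom p) (.atom p)

/-- A contradiction of L0. -/
def contrF {Atm : Type} (p : Atm) : L0 Unit Atm := .and (.atom p) (.neg (.atom p))

/-- Counterexample state S0: base = {contradiction, taut → rew}, empty valuation. -/
def St0 {Atm : Type} (rew : Unit → Atm) (p : Atm) : State Unit Atm :=
  ⟨fun _ => {contrF p, L0.impl (tautF p) (.atom (rew ()))}, ∅⟩

/-- Counterexample state Sp: empty base, valuation {p}. -/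
def StP {Atm : Type} (p : Atm) : State Unit Atm := ⟨fun _ => ∅, {p}⟩

/-- Non-expressibility of complete repulsion in the single-agent setting:
for every atom p and every CR-free formula φ, CR(1)p ↔ φ is not valid. -/
theorem cr_not_expressible {Atm : Type} [Countable Atm] [Infinite Atm]
    (rew pun : Unit → Atm)
    (hdistinct : ∀ i j : Unit, rew i ≠ pun j)
    (p : Atm) (φ : Formula Unit Atm) (hφ : CRFree φ) :
    ¬ valid rew pun ((Formula.cr () (.emb (.atom p))).iffF φ) := by
  intro hval
  set S0 : State Unit Atm := St0 rew p with hS0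
  set Sp : State Unit Atm := StP p with hSp
  set U1 : Set (State Unit Atm) := {S0} with hU1
  set U2 : Set (State Unit Atm) := {S0, Sp} with hU2
  have hattr : ∀ S' : State Unit Atm, attr rew () S0 S' := by
    intro S'
    refine ⟨tautF p, Or.inr rfl, ?_⟩
    simp [tautF, L0.impl, sat0]
  have hepi : ∀ S' : State Unit Atm, ¬ epi () S0 S' := by
    intro S' h
    have := h (contrF p) (Or.inl rfl)
    simp [contrF, sat0] at this
  have hrep : ∀ S' : State Unit Atm, ¬ repu pun () S0 S' := by
    rintro S' ⟨a, ha, -⟩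
    rcases ha with h | h
    · simp [L0.impl, contrF] at h
    · simp [L0.impl] at h
      exact hdistinct () () h.2.symm
  have key : ∀ f : Formula Unit Atm, CRFree f →
      (sat rew pun U1 S0 f ↔ sat rew pun U2 S0 f) := by
    intro f hf
    induction f with
    | emb a => simp [sat]
    | neg f ih => simp only [sat]; rw [ih hf]
    | and f g ihf ihg => simp only [sat]; rw [ihf hf.1, ihg hf.2]
    | box i f ih =>
        constructor <;> intro _ S' _ he <;> exact absurd he (hepi S')
    | ca i f ih =>
        constructor <;> intro _ S' _ _ <;> exact hattr S'
    | cr i f ih => exact absurd hf id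
    | ra i f ih =>
        constructor <;> intro _ S' _ _ he <;> exact absurd he (hepi S')
    | rr i f ih =>
        constructor <;> intro _ S' _ _ he <;> exact absurd he (hepi S')
  have hcr1 : sat rew pun U1 S0 (.cr () (.emb (.atom p))) := by
    intro S' hS' hs
    rw [Set.mem_singleton_iff] at hS'
    subst hS'
    exact absurd hs (by rw [hS0]; simp [sat, sat0, St0])
  have hcr2 : ¬ sat rew pun U2 S0 (.cr () (.emb (.atom p))) := by
    intro h
    exact hrep Sp (h Sp (Or.inr rfl) (by rw [hSp]; simp [sat, sat0, StP]))
  have h1 := hval U1 S0 rfl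
  have h2 := hval U2 S0 (Or.inl rfl)
  simp only [Formula.iffF, Formula.impF, sat] at h1 h2
  have hφ1 : sat rew pun U1 S0 φ := by
    by_contra hc
    exact h1.1 ⟨hcr1, hc⟩
  have hφ2 : sat rew pun U2 S0 φ := (key φ hφ).mp hφ1
  exact h2.2 ⟨hφ2, hcr2⟩
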